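/- Let (𝒮, 𝒮') be an optimal C_∧-correspondence, i.e. 𝒮 ∉ {∅, 𝒫}, 𝒮' ∉ {∅, 𝒫'}, and φ(𝒮, 𝒮') ≤ φ(𝒯, 𝒯') for every 𝒯 ⊆ 𝒫 with 𝒯 ∉ {∅, 𝒫} and every 𝒯' ⊆ 𝒫' with 𝒯' ∉ {∅, 𝒫'}. If (𝒮, 𝒮') is not mutual, then |𝒮| ∈ {1, |𝒫| − 1} or |𝒮'| ∈ {1, |𝒫'| − 1}. -/

import Mathlib

open Finset symmDiff

variable {V : Type*}

/-- `𝒜` is a partition of the finite set `V`: parts are nonempty, pairwise disjoint,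
and their union is all of `V`. -/
def IsPartition [DecidableEq V] [Fintype V] (𝒜 : Finset (Finset V)) : Prop :=
  (∀ P ∈ 𝒜, P.Nonempty) ∧
  (∀ P ∈ 𝒜, ∀ Q ∈ 𝒜, P ≠ Q → Disjoint P Q) ∧
  𝒜.biUnion id = Finset.univ

/-- `φ(𝒮, 𝒮') = |U_𝒮 △ U_𝒮'|`. -/
def phi [DecidableEq V] (𝒮 𝒮' : Finset (Finset V)) : ℕ :=
  ((𝒮.biUnion id) ∆ (𝒮'.biUnion id)).card

/-- A correspondence `(𝒮, 𝒮')` with `𝒮 ⊆ 𝒫`, `𝒮' ⊆ 𝒫'` is mutual if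
(1) `|P ∩ U_{𝒮'}| ≥ |P|/2` for all `P ∈ 𝒮`,
(2) `|P ∩ U_{𝒮'}| ≤ |P|/2` for all `P ∈ 𝒫 \ 𝒮`,
(3) `|P' ∩ U_𝒮| ≥ |P'|/2` for all `P' ∈ 𝒮'`,
(4) `|P' ∩ U_𝒮| ≤ |P'|/2` for all `P' ∈ 𝒫' \ 𝒮'`
(here `𝒜` plays the role of `𝒫` and `ℬ` the role of `𝒫'`). -/
def Mutual [DecidableEq V] (𝒜 ℬ 𝒮 𝒮' : Finset (Finset V)) : Prop :=
  (∀ P ∈ 𝒮, (P.card : ℚ) / 2 ≤ ((P ∩ 𝒮'.biUnion id).card : ℚ)) ∧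
  (∀ P ∈ 𝒜 \ 𝒮, ((P ∩ 𝒮'.biUnion id).card : ℚ) ≤ (P.card : ℚ) / 2) ∧
  (∀ P' ∈ 𝒮', (P'.card : ℚ) / 2 ≤ ((P' ∩ 𝒮.biUnion id).card : ℚ)) ∧
  (∀ P' ∈ ℬ \ 𝒮', ((P' ∩ 𝒮.biUnion id).card : ℚ) ≤ (P'.card : ℚ) / 2)

/-! Adding a part `P` to `𝒮` changes `φ` by `|P \ U_𝒮'| - |P ∩ U_𝒮'|`, removing it by the
opposite amount. So a part violating mutuality can be moved across to strictly decrease `φ`, and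
optimality forbids this unless the move empties `𝒮` (so `|𝒮| = 1`) or fills it up to `𝒫`
(so `|𝒮| = |𝒫| - 1`). As `φ` is symmetric, the same holds for `𝒮'`. -/

section
variable [DecidableEq V]

lemma card_union_symmDiff_add_card_inter {P A : Finset V} (B : Finset V) (h : Disjoint P A) :
    ((P ∪ A) ∆ B).card + (P ∩ B).card = (A ∆ B).card + (P \ B).card := by
  have hPA : ∀ x ∈ P, x ∉ A := fun _ hx ↦ disjoint_left.mp h hx
  rw [← card_union_of_disjoint, ← card_union_of_disjoint]
  · congr 1
    ext x
    have := hPA x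
    simp only [mem_union, mem_symmDiff, mem_inter, mem_sdiff]
    tauto
  all_goals
    rw [disjoint_left]
    intro x
    have := hPA x
    simp only [mem_symmDiff, mem_union, mem_inter, mem_sdiff]
    tauto

lemma phi_comm (𝒮 𝒮' : Finset (Finset V)) : phi 𝒮 𝒮' = phi 𝒮' 𝒮 := by
  rw [phi, phi, symmDiff_comm]

lemma phi_insert_add_card_inter {𝒮 : Finset (Finset V)} {P : Finset V}
    (hP : Disjoint P (𝒮.biUnion id)) (𝒮' : Finset (Finset V)) :
    phi (insert P 𝒮) 𝒮' + (P ∩ 𝒮'.biUnion id).card = phi 𝒮 𝒮' + (P \ 𝒮'.biUnion id).card := by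
  rw [phi, phi, biUnion_insert, id]
  exact card_union_symmDiff_add_card_inter _ hP

lemma disjoint_biUnion_of_pairwiseDisjoint {𝒜 𝒮 : Finset (Finset V)} {P : Finset V}
    (hdisj : (𝒜 : Set (Finset V)).PairwiseDisjoint id) (hS : 𝒮 ⊆ 𝒜) (hP : P ∈ 𝒜) (hPS : P ∉ 𝒮) :
    Disjoint P (𝒮.biUnion id) :=
  (disjoint_biUnion_right _ _ _).mpr fun _ hQ ↦
    hdisj hP (hS hQ) fun hPQ ↦ hPS (hPQ ▸ hQ)

variable {𝒜 𝒮 𝒮' : Finset (Finset V)} {P : Finset V}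

lemma card_eq_one_of_phi_le_of_card_inter_lt
    (hdisj : (𝒜 : Set (Finset V)).PairwiseDisjoint id) (hS : 𝒮 ⊆ 𝒜) (hnP : 𝒮 ≠ 𝒜)
    (hopt : ∀ 𝒯 ⊆ 𝒜, 𝒯 ≠ ∅ → 𝒯 ≠ 𝒜 → phi 𝒮 𝒮' ≤ phi 𝒯 𝒮')
    (hP : P ∈ 𝒮) (hlt : (P ∩ 𝒮'.biUnion id).card < (P \ 𝒮'.biUnion id).card) :
    𝒮.card = 1 := by
  by_contra hcard
  have hT : 𝒮.erase P ≠ ∅ := by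
    rw [← nonempty_iff_ne_empty, ← card_pos, card_erase_of_mem hP]
    have := card_pos.mpr ⟨P, hP⟩
    omega
  have hT𝒜 : 𝒮.erase P ≠ 𝒜 := fun h ↦ hnP (subset_antisymm hS (h ▸ erase_subset P 𝒮))
  have hle := hopt _ ((erase_subset P 𝒮).trans hS) hT hT𝒜
  have hmove := phi_insert_add_card_inter
    (disjoint_biUnion_of_pairwiseDisjoint hdisj ((erase_subset P 𝒮).trans hS) (hS hP)
      (notMem_erase P 𝒮)) 𝒮'
  rw [insert_erase hP] at hmove
  omega

lemma card_eq_card_sub_one_of_phi_le_of_card_sdiff_lt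
    (hdisj : (𝒜 : Set (Finset V)).PairwiseDisjoint id) (hS : 𝒮 ⊆ 𝒜)
    (hopt : ∀ 𝒯 ⊆ 𝒜, 𝒯 ≠ ∅ → 𝒯 ≠ 𝒜 → phi 𝒮 𝒮' ≤ phi 𝒯 𝒮')
    (hP𝒜 : P ∈ 𝒜) (hPS : P ∉ 𝒮) (hlt : (P \ 𝒮'.biUnion id).card < (P ∩ 𝒮'.biUnion id).card) :
    𝒮.card = 𝒜.card - 1 := by
  have hT𝒜 : insert P 𝒮 = 𝒜 := by
    by_contra hT𝒜
    have hle := hopt _ (insert_subset hP𝒜 hS) (insert_nonempty P 𝒮).ne_empty hT𝒜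
    have hmove := phi_insert_add_card_inter
      (disjoint_biUnion_of_pairwiseDisjoint hdisj hS hP𝒜 hPS) 𝒮'
    omega
  rw [← hT𝒜, card_insert_of_notMem hPS, Nat.add_sub_cancel]

lemma IsPartition.pairwiseDisjoint [Fintype V] {𝒜 : Finset (Finset V)}
    (h : IsPartition 𝒜) : (𝒜 : Set (Finset V)).PairwiseDisjoint id :=
  fun P hP Q hQ hPQ ↦ h.2.1 P hP Q hQ hPQ

lemma card_inter_lt_card_sdiff_of_lt_half {P B : Finset V}
    (h : ((P ∩ B).card : ℚ) < (P.card : ℚ) / 2) :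
    (P ∩ B).card < (P \ B).card := by
  have hsum := card_inter_add_card_sdiff P B
  have : 2 * (P ∩ B).card < P.card := by
    exact_mod_cast (by linarith : 2 * ((P ∩ B).card : ℚ) < P.card)
  omega

lemma card_sdiff_lt_card_inter_of_half_lt {P B : Finset V}
    (h : (P.card : ℚ) / 2 < ((P ∩ B).card : ℚ)) :
    (P \ B).card < (P ∩ B).card := by
  have hsum := card_inter_add_card_sdiff P B
  have : P.card < 2 * (P ∩ B).card := by
    exact_mod_cast (by linarith : (P.card : ℚ) < 2 * (P ∩ B).card)
  omega

end

/-- if `(𝒮, 𝒮')` is an optimal `C_∧`-correspondence (i.e.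
`𝒮 ∉ {∅, 𝒫}`, `𝒮' ∉ {∅, 𝒫'}`, and `φ(𝒮, 𝒮') ≤ φ(𝒯, 𝒯')` for all `𝒯 ⊆ 𝒫` with
`𝒯 ∉ {∅, 𝒫}` and all `𝒯' ⊆ 𝒫'` with `𝒯' ∉ {∅, 𝒫'}`) which is not mutual, then
`|𝒮| ∈ {1, |𝒫| − 1}` or `|𝒮'| ∈ {1, |𝒫'| − 1}`
(here `𝒜` plays the role of `𝒫` and `ℬ` the role of `𝒫'`). -/
theorem stmt18 [DecidableEq V] [Fintype V] (𝒜 ℬ : Finset (Finset V))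
    (hA : IsPartition 𝒜) (hB : IsPartition ℬ)
    (𝒮 𝒮' : Finset (Finset V)) (hS : 𝒮 ⊆ 𝒜) (hS' : 𝒮' ⊆ ℬ)
    (hne : 𝒮 ≠ ∅) (hnP : 𝒮 ≠ 𝒜) (hne' : 𝒮' ≠ ∅) (hnP' : 𝒮' ≠ ℬ)
    (hopt : ∀ 𝒯 ⊆ 𝒜, 𝒯 ≠ ∅ → 𝒯 ≠ 𝒜 →
      ∀ 𝒯' ⊆ ℬ, 𝒯' ≠ ∅ → 𝒯' ≠ ℬ → phi 𝒮 𝒮' ≤ phi 𝒯 𝒯')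
    (hnm : ¬ Mutual 𝒜 ℬ 𝒮 𝒮') :
    (𝒮.card = 1 ∨ 𝒮.card = 𝒜.card - 1) ∨
    (𝒮'.card = 1 ∨ 𝒮'.card = ℬ.card - 1) := by
  have hoptA : ∀ 𝒯 ⊆ 𝒜, 𝒯 ≠ ∅ → 𝒯 ≠ 𝒜 → phi 𝒮 𝒮' ≤ phi 𝒯 𝒮' :=
    fun 𝒯 h𝒯 h𝒯e h𝒯𝒜 ↦ hopt 𝒯 h𝒯 h𝒯e h𝒯𝒜 𝒮' hS' hne' hnP'
  have hoptB : ∀ 𝒯' ⊆ ℬ, 𝒯' ≠ ∅ → 𝒯' ≠ ℬ → phi 𝒮' 𝒮 ≤ phi 𝒯' 𝒮 := by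
    intro 𝒯' h𝒯' h𝒯'e h𝒯'ℬ
    rw [phi_comm 𝒮', phi_comm 𝒯']
    exact hopt 𝒮 hS hne hnP 𝒯' h𝒯' h𝒯'e h𝒯'ℬ
  simp only [Mutual, not_and_or, not_forall, not_le, mem_sdiff] at hnm
  rcases hnm with ⟨P, hP, hlt⟩ | ⟨P, ⟨hP, hPS⟩, hlt⟩ | ⟨P, hP, hlt⟩ | ⟨P, ⟨hP, hPS⟩, hlt⟩
  · exact .inl <| .inl <| card_eq_one_of_phi_le_of_card_inter_lt hA.pairwiseDisjoint hS hnP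
      hoptA hP (card_inter_lt_card_sdiff_of_lt_half hlt)
  · exact .inl <| .inr <| card_eq_card_sub_one_of_phi_le_of_card_sdiff_lt hA.pairwiseDisjoint hS
      hoptA hP hPS (card_sdiff_lt_card_inter_of_half_lt hlt)
  · exact .inr <| .inl <| card_eq_one_of_phi_le_of_card_inter_lt hB.pairwiseDisjoint hS' hnP'
      hoptB hP (card_inter_lt_card_sdiff_of_lt_half hlt)
  · exact .inr <| .inr <| card_eq_card_sub_one_of_phi_le_of_card_sdiff_lt hB.pairwiseDisjoint hS'
      hoptB hP hPS (card_sdiff_lt_card_inter_of_half_lt hlt)
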